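/- arXiv:1606.07602 — 2 statements merged into one kernel-verified Lean document; each statement's English description precedes it below -/
import Mathlib

section
/- Let T be a Markov operator on L¹([0,1], λ) with associated σ-algebras σ_T and σ*_T. If ψ ∈ L¹([0,1], λ) is λ-a.e. equal to a σ_T-measurable function, then Tψ is λ-a.e. equal to a σ*_T-measurable function. -/
open MeasureTheory Set unitInterval

noncomputable section

open Classical in
/-- The indicator function `𝟙_S` of a set `S ⊆ [0,1]`, as an element of `L¹([0,1], λ)`
(where `λ` is Lebesgue measure on the unit interval `I = [0,1]`).
If `S` is not measurable we default to `0`. -/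
def ind (S : Set I) : Lp ℝ 1 (volume : Measure I) :=
  if hS : MeasurableSet S then indicatorConstLp 1 hS (measure_ne_top _ _) (1:ℝ) else 0

/-- A Markov operator on `L¹([0,1], λ)`: a bounded linear operator `T` with
(i) `T𝟙 = 𝟙`, (ii) `∫ Tψ = ∫ ψ` for all `ψ ∈ L¹`, (iii) `Tψ ≥ 0` a.e. whenever `ψ ≥ 0` a.e. -/
structure IsMarkovOperator
    (T : Lp ℝ 1 (volume : Measure I) →L[ℝ] Lp ℝ 1 (volume : Measure I)) : Prop where
  map_one : T (ind univ) = ind univ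
  integral_map : ∀ ψ : Lp ℝ 1 (volume : Measure I), ∫ x, (T ψ) x = ∫ x, ψ x
  positive : ∀ ψ : Lp ℝ 1 (volume : Measure I), 0 ≤ᵐ[volume] ⇑ψ → 0 ≤ᵐ[volume] ⇑(T ψ)

/-- `σ_T`: the collection of Borel sets `S ⊆ [0,1]` with `T𝟙_S = 𝟙_R` (λ-a.e.) for some Borel
`R ⊆ [0,1]`.  (Equality in `L¹` is exactly λ-a.e. equality.) -/
def sigmaT (T : Lp ℝ 1 (volume : Measure I) →L[ℝ] Lp ℝ 1 (volume : Measure I)) :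
    Set (Set I) :=
  {S | MeasurableSet S ∧ ∃ R : Set I, MeasurableSet R ∧ T (ind S) = ind R}

/-- `σ*_T`: the collection of Borel sets `R ⊆ [0,1]` with `T𝟙_S = 𝟙_R` (λ-a.e.) for some Borel
`S ⊆ [0,1]`. -/
def sigmaTstar (T : Lp ℝ 1 (volume : Measure I) →L[ℝ] Lp ℝ 1 (volume : Measure I)) :
    Set (Set I) :=
  {R | MeasurableSet R ∧ ∃ S : Set I, MeasurableSet S ∧ T (ind S) = ind R}

open Filter Topology

/-! Sets in `σ_T` are exactly the Borel sets `S` for which `T𝟙_S` takes only the values `0` and `1`.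
That description is stable under finite unions (by positivity of `T` and `T𝟙 = 𝟙`) and under
increasing unions (by continuity of `T`, since an `L¹`-limit of `{0,1}`-valued functions is
`{0,1}`-valued), so `σ_T` is a σ-algebra. The functions `φ` for which `Tφ` has a
`σ*_T`-measurable version form a closed subspace of `L¹` containing `𝟙_S` for `S ∈ σ_T`, so it
contains every `σ_T`-measurable function. -/

namespace MeasureTheory.Lp

theorem isClosed_setOf_ae_mem {α E : Type*} [MeasurableSpace α] {μ : Measure α}
    [NormedAddCommGroup E] {p : ENNReal} [Fact (1 ≤ p)] {C : Set E} (hC : IsClosed C) :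
    IsClosed {f : Lp E p μ | ∀ᵐ x ∂μ, f x ∈ C} := by
  refine isClosed_of_closure_subset fun f hf => ?_
  obtain ⟨u, hu, hlim⟩ := mem_closure_iff_seq_limit.1 hf
  obtain ⟨ns, -, hns⟩ := (tendstoInMeasure_of_tendsto_Lp hlim).exists_seq_tendsto_ae
  filter_upwards [hns, ae_all_iff.2 fun n => hu (ns n)] with x hx hxC
  exact hC.mem_of_tendsto hx (Eventually.of_forall hxC)

end MeasureTheory.Lp

section Indicator

variable {S : Set I}

lemma ind_of_measurableSet (hS : MeasurableSet S) :
    ind S = indicatorConstLp 1 hS (measure_ne_top _ _) (1 : ℝ) := by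
  rw [ind, dif_pos hS]

lemma coeFn_ind (hS : MeasurableSet S) : ⇑(ind S) =ᵐ[volume] S.indicator 1 := by
  rw [ind_of_measurableSet hS]; exact indicatorConstLp_coeFn

lemma indicatorConstLp_eq_smul_ind (hS : MeasurableSet S) (hμS : volume S ≠ ⊤) (c : ℝ) :
    indicatorConstLp 1 hS hμS c = c • ind S := by
  refine Lp.ext ?_
  filter_upwards [indicatorConstLp_coeFn (p := 1) (hs := hS) (hμs := hμS) (c := c),
    Lp.coeFn_smul c (ind S), coeFn_ind hS] with x h₁ h₂ h₃
  by_cases hx : x ∈ S <;> simp [h₁, h₂, h₃, hx]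

lemma ind_mono {S' : Set I} (hS : MeasurableSet S) (hS' : MeasurableSet S') (h : S ⊆ S') :
    ⇑(ind S) ≤ᵐ[volume] ⇑(ind S') := by
  filter_upwards [coeFn_ind hS, coeFn_ind hS'] with x h₁ h₂
  rw [h₁, h₂]
  exact indicator_le_indicator_of_subset h (fun _ => zero_le_one) x

lemma ind_union_le {S' : Set I} (hS : MeasurableSet S) (hS' : MeasurableSet S') :
    ⇑(ind (S ∪ S')) ≤ᵐ[volume] ⇑(ind S + ind S') := by
  filter_upwards [coeFn_ind (hS.union hS'), coeFn_ind hS, coeFn_ind hS',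
    Lp.coeFn_add (ind S) (ind S')] with x h h₁ h₂ h₃
  rw [h, h₃, Pi.add_apply, h₁, h₂]
  by_cases hx : x ∈ S <;> by_cases hx' : x ∈ S' <;> simp [hx, hx']

lemma ind_compl (hS : MeasurableSet S) : ind Sᶜ = ind univ - ind S := by
  refine Lp.ext ?_
  filter_upwards [coeFn_ind hS.compl, coeFn_ind hS, coeFn_ind MeasurableSet.univ,
    Lp.coeFn_sub (ind univ) (ind S)] with x h h₁ h₂ h₃
  rw [h, h₃, Pi.sub_apply, h₁, h₂]
  by_cases hx : x ∈ S <;> simp [hx]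

lemma exists_eq_ind_iff (φ : Lp ℝ 1 (volume : Measure I)) :
    (∃ R, MeasurableSet R ∧ φ = ind R) ↔ ∀ᵐ x, φ x ∈ ({0, 1} : Set ℝ) := by
  constructor
  · rintro ⟨R, hR, rfl⟩
    filter_upwards [coeFn_ind hR] with x hx
    by_cases hxR : x ∈ R <;> simp [hx, hxR]
  · intro h
    have hR : MeasurableSet (⇑φ ⁻¹' {1}) :=
      (Lp.stronglyMeasurable φ).measurable (measurableSet_singleton 1)
    refine ⟨_, hR, Lp.ext ?_⟩
    filter_upwards [h, coeFn_ind hR] with x hx hx'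
    rw [mem_insert_iff, mem_singleton_iff] at hx
    rcases hx with hx | hx <;> simp [hx', hx]

lemma tendsto_ind_iUnion {F : ℕ → Set I} (hF : ∀ n, MeasurableSet (F n)) (hmono : Monotone F) :
    Tendsto (fun n => ind (F n)) atTop (𝓝 (ind (⋃ n, F n))) := by
  simp only [ind_of_measurableSet (hF _), ind_of_measurableSet (MeasurableSet.iUnion hF)]
  refine tendsto_indicatorConstLp_set ENNReal.one_ne_top ?_
  simp only [symmDiff_of_le (subset_iUnion F _)]
  have hlim := tendsto_measure_iInter_atTop (μ := (volume : Measure I))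
    (fun n => ((MeasurableSet.iUnion hF).diff (hF n)).nullMeasurableSet)
    (fun m n hmn => sdiff_subset_sdiff_right (hmono hmn)) ⟨0, measure_ne_top _ _⟩
  rwa [← sdiff_iUnion, sdiff_self, measure_empty] at hlim

end Indicator

variable {T : Lp ℝ 1 (volume : Measure I) →L[ℝ] Lp ℝ 1 (volume : Measure I)}

lemma mem_sigmaT_iff {S : Set I} :
    S ∈ sigmaT T ↔ MeasurableSet S ∧ ∀ᵐ x, T (ind S) x ∈ ({0, 1} : Set ℝ) := by
  rw [← exists_eq_ind_iff]; rfl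

lemma iUnion_mem_sigmaT_of_monotone {F : ℕ → Set I}
    (hF : ∀ n, F n ∈ sigmaT T) (hmono : Monotone F) : (⋃ n, F n) ∈ sigmaT T := by
  have hFm : ∀ n, MeasurableSet (F n) := fun n => (hF n).1
  have hlim := (T.continuous.tendsto _).comp (tendsto_ind_iUnion hFm hmono)
  refine mem_sigmaT_iff.2 ⟨MeasurableSet.iUnion hFm, ?_⟩
  exact (Lp.isClosed_setOf_ae_mem (toFinite _).isClosed).mem_of_tendsto hlim
    (Eventually.of_forall fun n => (mem_sigmaT_iff.1 (hF n)).2)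

lemma aestronglyMeasurable_apply_ind {S : Set I} (hS : S ∈ sigmaT T) :
    AEStronglyMeasurable[MeasurableSpace.generateFrom (sigmaTstar T)] ⇑(T (ind S)) volume := by
  obtain ⟨hSm, R, hR, hTS⟩ := hS
  have hR' : MeasurableSet[MeasurableSpace.generateFrom (sigmaTstar T)] R :=
    MeasurableSpace.measurableSet_generateFrom ⟨hR, S, hSm, hTS⟩
  rw [hTS]
  exact (stronglyMeasurable_one.indicator hR').aestronglyMeasurable.congr (coeFn_ind hR).symm

namespace IsMarkovOperator

lemma map_mono (hT : IsMarkovOperator T) {f g : Lp ℝ 1 (volume : Measure I)}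
    (hfg : ⇑f ≤ᵐ[volume] ⇑g) : ⇑(T f) ≤ᵐ[volume] ⇑(T g) := by
  have hpos : 0 ≤ᵐ[volume] ⇑(T (g - f)) := hT.positive _ <| by
    filter_upwards [Lp.coeFn_sub g f, hfg] with x hx hle
    rw [hx, Pi.sub_apply, Pi.zero_apply, sub_nonneg]
    exact hle
  filter_upwards [hpos, Lp.coeFn_sub (T g) (T f)] with x hx hsub
  rw [map_sub, hsub] at hx
  simpa using hx

lemma compl_mem_sigmaT (hT : IsMarkovOperator T) {S : Set I} (hS : S ∈ sigmaT T) :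
    Sᶜ ∈ sigmaT T := by
  obtain ⟨hSm, R, hRm, hTS⟩ := hS
  refine ⟨hSm.compl, Rᶜ, hRm.compl, ?_⟩
  rw [ind_compl hSm, map_sub, hT.map_one, hTS, ind_compl hRm]

/-- `T𝟙_{S ∪ S'}` is squeezed between `max (𝟙_R) (𝟙_R')` and `min 1 (𝟙_R + 𝟙_R')`. -/
lemma union_mem_sigmaT (hT : IsMarkovOperator T) {S S' : Set I} (hS : S ∈ sigmaT T)
    (hS' : S' ∈ sigmaT T) : S ∪ S' ∈ sigmaT T := by
  obtain ⟨hSm, R, hRm, hTS⟩ := hS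
  obtain ⟨hSm', R', hRm', hTS'⟩ := hS'
  have hU := hSm.union hSm'
  have hge := hT.map_mono (ind_mono hSm hU subset_union_left)
  have hge' := hT.map_mono (ind_mono hSm' hU subset_union_right)
  have hle := hT.map_mono (ind_union_le hSm hSm')
  have hle_one := hT.map_mono (ind_mono hU MeasurableSet.univ (subset_univ _))
  rw [hTS] at hge; rw [hTS'] at hge'; rw [map_add, hTS, hTS'] at hle; rw [hT.map_one] at hle_one
  refine mem_sigmaT_iff.2 ⟨hU, ?_⟩
  filter_upwards [hge, hge', hle, hle_one, coeFn_ind hRm, coeFn_ind hRm',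
    coeFn_ind MeasurableSet.univ, Lp.coeFn_add (ind R) (ind R')]
    with x hge hge' hle hle_one hR hR' huniv hadd
  rw [hR] at hge; rw [hR'] at hge'; rw [hadd, Pi.add_apply, hR, hR'] at hle
  rw [huniv, indicator_univ, Pi.one_apply] at hle_one
  by_cases hx : x ∈ R
  · simp only [indicator_of_mem hx, Pi.one_apply] at hge
    exact Or.inr (le_antisymm hle_one hge)
  by_cases hx' : x ∈ R'
  · simp only [indicator_of_mem hx', Pi.one_apply] at hge'
    exact Or.inr (le_antisymm hle_one hge')
  simp only [indicator_of_notMem hx, indicator_of_notMem hx', add_zero] at hge hle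
  exact Or.inl (le_antisymm hle hge)

lemma iUnion_mem_sigmaT (hT : IsMarkovOperator T) {S : ℕ → Set I} (hS : ∀ n, S n ∈ sigmaT T) :
    (⋃ n, S n) ∈ sigmaT T := by
  have hacc : ∀ n, accumulate S n ∈ sigmaT T := by
    intro n
    induction n with
    | zero => simpa [accumulate_zero_nat] using hS 0
    | succ n ih => rw [accumulate_succ]; exact hT.union_mem_sigmaT ih (hS (n + 1))
  rw [← iUnion_accumulate]
  exact iUnion_mem_sigmaT_of_monotone hacc monotone_accumulate

lemma mem_sigmaT_of_measurableSet_generateFrom (hT : IsMarkovOperator T) {S : Set I}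
    (hS : MeasurableSet[MeasurableSpace.generateFrom (sigmaT T)] S) : S ∈ sigmaT T := by
  induction S, hS using MeasurableSpace.generateFrom_induction with
  | hC S hS => exact hS
  | empty =>
    simpa using hT.compl_mem_sigmaT ⟨MeasurableSet.univ, univ, MeasurableSet.univ, hT.map_one⟩
  | compl S _ hS => exact hT.compl_mem_sigmaT hS
  | iUnion S _ hS => exact hT.iUnion_mem_sigmaT hS

end IsMarkovOperator

/-- Let `T` be a Markov operator on `L¹([0,1], λ)` with associated σ-algebras
`σ_T` and `σ*_T`. If `ψ ∈ L¹([0,1], λ)` is λ-a.e. equal to a `σ_T`-measurable function, then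
`Tψ` is λ-a.e. equal to a `σ*_T`-measurable function. -/
theorem stmt3
    (T : Lp ℝ 1 (volume : Measure I) →L[ℝ] Lp ℝ 1 (volume : Measure I))
    (hT : IsMarkovOperator T) (ψ : Lp ℝ 1 (volume : Measure I))
    (h : ∃ g : I → ℝ, Measurable[MeasurableSpace.generateFrom (sigmaT T)] g ∧
      ⇑ψ =ᵐ[volume] g) :
    ∃ g' : I → ℝ, Measurable[MeasurableSpace.generateFrom (sigmaTstar T)] g' ∧
      ⇑(T ψ) =ᵐ[volume] g' := by
  obtain ⟨g, hg, hψg⟩ := h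
  have hle : MeasurableSpace.generateFrom (sigmaT T) ≤ (inferInstance : MeasurableSpace I) :=
    MeasurableSpace.generateFrom_le fun _ hS => hS.1
  have hle' : MeasurableSpace.generateFrom (sigmaTstar T) ≤ (inferInstance : MeasurableSpace I) :=
    MeasurableSpace.generateFrom_le fun _ hR => hR.1
  let P : Lp ℝ 1 (volume : Measure I) → Prop := fun φ =>
    AEStronglyMeasurable[MeasurableSpace.generateFrom (sigmaTstar T)] ⇑(T φ) volume
  have hP : P ψ := by
    refine Lp.induction_stronglyMeasurable hle ENNReal.one_ne_top P ?_ ?_ ?_ ψ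
      ⟨g, hg.stronglyMeasurable, hψg⟩
    · intro c S hS hμS
      simp only [P, Lp.simpleFunc.coe_indicatorConst, indicatorConstLp_eq_smul_ind, map_smul]
      exact ((aestronglyMeasurable_apply_ind
        (hT.mem_sigmaT_of_measurableSet_generateFrom hS)).const_smul c).congr
        (Lp.coeFn_smul _ _).symm
    · intro f g _ _ _ _ _ hf hg
      simp only [P, map_add]
      exact (hf.add hg).congr (Lp.coeFn_add _ _).symm
    · exact ((isClosed_aestronglyMeasurable hle').preimage T.continuous).preimage
        continuous_subtype_val
  exact ⟨hP.mk _, hP.stronglyMeasurable_mk.measurable, hP.ae_eq_mk⟩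
end
end

section
/- Let T be a Markov operator on L¹([0,1], λ), μ a doubly stochastic measure associated to T (μ(R × S) = ∫_R T𝟙_S dλ for all Borel R, S), and f, g : [0,1] → [0,1] measure-preserving Borel functions. Then μ({(x,y) ∈ [0,1]² : f(x) = g(y)}) = 1 if and only if T𝟙_{g⁻¹(B)} = 𝟙_{f⁻¹(B)} λ-a.e. for every Borel B ⊆ [0,1]. -/
open MeasureTheory Set unitInterval

noncomputable section

lemma ind_coe {S : Set I} (hS : MeasurableSet S) :
    ⇑(ind S) =ᵐ[volume] S.indicator (fun _ => (1:ℝ)) := by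
  rw [ind, dif_pos hS]
  exact indicatorConstLp_coeFn

lemma integral_ind {S : Set I} (hS : MeasurableSet S) :
    ∫ x, (ind S) x = ((volume : Measure I) S).toReal := by
  rw [integral_congr_ae (ind_coe hS), integral_indicator hS]
  simp [measureReal_def]

lemma ind_add_compl {S : Set I} (hS : MeasurableSet S) : ind S + ind Sᶜ = ind univ := by
  apply Lp.ext
  filter_upwards [Lp.coeFn_add (ind S) (ind Sᶜ), ind_coe hS, ind_coe hS.compl,
    ind_coe MeasurableSet.univ] with x h1 h2 h3 h4
  rw [h1, Pi.add_apply, h2, h3, h4]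
  by_cases hx : x ∈ S <;> simp [hx]

lemma ind_nonneg {S : Set I} (hS : MeasurableSet S) : 0 ≤ᵐ[volume] ⇑(ind S) := by
  filter_upwards [ind_coe hS] with x hx
  rw [hx]
  exact Set.indicator_nonneg (fun _ _ => zero_le_one) x

lemma markov_le_one {T : Lp ℝ 1 (volume : Measure I) →L[ℝ] Lp ℝ 1 (volume : Measure I)}
    (hT : IsMarkovOperator T) {C : Set I} (hC : MeasurableSet C) :
    ⇑(T (ind C)) ≤ᵐ[volume] fun _ => (1:ℝ) := by
  have hsum : T (ind C) + T (ind Cᶜ) = ind univ := by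
    rw [← map_add, ind_add_compl hC, hT.map_one]
  have hpos := hT.positive (ind Cᶜ) (ind_nonneg hC.compl)
  have hcoe : ⇑(T (ind C)) + ⇑(T (ind Cᶜ)) =ᵐ[volume] ⇑(ind univ) := by
    rw [← hsum]; exact (Lp.coeFn_add _ _).symm
  filter_upwards [hcoe, hpos, ind_coe (MeasurableSet.univ : MeasurableSet (univ : Set I))]
    with x h1 h2 h3
  have : T (ind C) x + T (ind Cᶜ) x = 1 := by
    have := h1; rw [h3] at this
    simpa using this
  simp only [Pi.zero_apply] at h2; linarith

/-- Key forward step: if `μ(A ×ˢ C) = volume A` and `volume A = volume C`, then `T 𝟙_C = 𝟙_A`. -/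
lemma markov_eq_ind {T : Lp ℝ 1 (volume : Measure I) →L[ℝ] Lp ℝ 1 (volume : Measure I)}
    (hT : IsMarkovOperator T) (μ : Measure (I × I))
    (hassoc : ∀ R S : Set I, MeasurableSet R → MeasurableSet S →
      μ (R ×ˢ S) = ENNReal.ofReal (∫ x in R, (T (ind S)) x))
    {A C : Set I} (hA : MeasurableSet A) (hC : MeasurableSet C)
    (hvol : (volume : Measure I) A = volume C)
    (hAC : μ (A ×ˢ C) = volume A) :
    T (ind C) = ind A := by
  set φ := ⇑(T (ind C)) with hφ
  have hint : Integrable φ (volume : Measure I) := L1.integrable_coeFn _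
  have hpos : 0 ≤ᵐ[volume] φ := hT.positive _ (ind_nonneg hC)
  have hle : φ ≤ᵐ[volume] fun _ => (1:ℝ) := markov_le_one hT hC
  -- ∫_A φ = (volume A).toReal
  have hIA : ∫ x in A, φ x = ((volume : Measure I) A).toReal := by
    have h1 := (hassoc A C hA hC).symm.trans hAC
    have h2 : 0 ≤ ∫ x in A, φ x :=
      setIntegral_nonneg_ae hA (hpos.mono fun x hx _ => hx)
    rw [← h1, ENNReal.toReal_ofReal h2]
  -- total integral
  have hItot : ∫ x, φ x = ((volume : Measure I) A).toReal := by
    rw [hφ, hT.integral_map, integral_ind hC, ← hvol]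
  -- integral on Aᶜ is zero
  have hIAc : ∫ x in Aᶜ, φ x = 0 := by
    have := integral_add_compl hA hint
    rw [hIA, hItot] at this
    linarith
  -- φ = 0 a.e. on Aᶜ
  have hz : φ =ᵐ[volume.restrict Aᶜ] 0 := by
    rw [← integral_eq_zero_iff_of_nonneg_ae (ae_restrict_of_ae hpos) hint.restrict]
    exact hIAc
  -- φ = 1 a.e. on A
  have ho : φ =ᵐ[volume.restrict A] fun _ => (1:ℝ) := by
    have hfin : (volume : Measure I) A ≠ ⊤ := measure_ne_top _ _
    have hconst : Integrable (fun _ : I => (1:ℝ)) (volume.restrict A) := by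
      apply integrable_const
    have hdiff : ∫ x in A, ((fun _ => (1:ℝ)) x - φ x) = 0 := by
      rw [integral_sub hconst hint.restrict, hIA]
      simp [Measure.restrict_apply_univ, measureReal_def]
    have hnn : 0 ≤ᵐ[volume.restrict A] fun x => (1:ℝ) - φ x := by
      filter_upwards [ae_restrict_of_ae hle] with x hx
      simpa using hx
    have := (integral_eq_zero_iff_of_nonneg_ae hnn (hconst.sub hint.restrict)).mp hdiff
    filter_upwards [this] with x hx
    have : (1:ℝ) - φ x = 0 := hx
    linarith [this]
  -- combine
  apply Lp.ext
  have hglue : φ =ᵐ[volume] A.indicator (fun _ => (1:ℝ)) := by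
    rw [← Measure.restrict_add_restrict_compl (μ := (volume : Measure I)) hA]
    rw [Filter.EventuallyEq, ae_add_measure_iff]
    constructor
    · filter_upwards [ho, ae_restrict_mem hA] with x hx hmem
      simp [hx, hmem]
    · filter_upwards [hz, ae_restrict_mem hA.compl] with x hx hmem
      simp only [mem_compl_iff] at hmem
      simp [hx, hmem, Set.indicator_of_notMem hmem]
  exact hglue.trans (ind_coe hA).symm

/-- Let `T` be a Markov operator on `L¹([0,1], λ)`, `μ` a doubly stochastic
measure associated to `T` (`μ(R × S) = ∫_R T𝟙_S dλ` for all Borel `R, S`), and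
`f, g : [0,1] → [0,1]` measure-preserving Borel functions.  Then
`μ({(x,y) : f(x) = g(y)}) = 1` if and only if `T𝟙_{g⁻¹(B)} = 𝟙_{f⁻¹(B)}` λ-a.e. for every
Borel `B ⊆ [0,1]`. -/
theorem stmt8
    (T : Lp ℝ 1 (volume : Measure I) →L[ℝ] Lp ℝ 1 (volume : Measure I))
    (hT : IsMarkovOperator T)
    (μ : Measure (I × I)) (hprob : IsProbabilityMeasure μ)
    (hmarg1 : μ.map Prod.fst = volume) (hmarg2 : μ.map Prod.snd = volume)
    (hassoc : ∀ R S : Set I, MeasurableSet R → MeasurableSet S →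
      μ (R ×ˢ S) = ENNReal.ofReal (∫ x in R, (T (ind S)) x))
    (f g : I → I)
    (hf : MeasurePreserving f volume volume) (hg : MeasurePreserving g volume volume) :
    μ {p : I × I | f p.1 = g p.2} = 1 ↔
    (∀ B : Set I, MeasurableSet B → T (ind (g ⁻¹' B)) = ind (f ⁻¹' B)) := by
  have hE : MeasurableSet {p : I × I | f p.1 = g p.2} :=
    (hf.measurable.comp measurable_fst).stronglyMeasurable.measurableSet_eq_fun
      (hg.measurable.comp measurable_snd).stronglyMeasurable
  constructor
  · intro hμ B hB
    have hA : MeasurableSet (f ⁻¹' B) := hf.measurable hB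
    have hC : MeasurableSet (g ⁻¹' B) := hg.measurable hB
    have hvol : (volume : Measure I) (f ⁻¹' B) = volume (g ⁻¹' B) := by
      rw [hf.measure_preimage hB.nullMeasurableSet, hg.measure_preimage hB.nullMeasurableSet]
    have hEc : μ {p : I × I | f p.1 = g p.2}ᶜ = 0 := (prob_compl_eq_zero_iff hE).mpr hμ
    have hAuniv : μ ((f ⁻¹' B) ×ˢ (univ : Set I)) = volume (f ⁻¹' B) := by
      rw [Set.prod_univ, ← hmarg1, Measure.map_apply measurable_fst hA]
    have hAC : μ ((f ⁻¹' B) ×ˢ (g ⁻¹' B)) = volume (f ⁻¹' B) := by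
      apply le_antisymm
      · calc μ ((f ⁻¹' B) ×ˢ (g ⁻¹' B)) ≤ μ ((f ⁻¹' B) ×ˢ (univ : Set I)) :=
              measure_mono (Set.prod_mono subset_rfl (subset_univ _))
          _ = volume (f ⁻¹' B) := hAuniv
      · calc volume (f ⁻¹' B) = μ ((f ⁻¹' B) ×ˢ (univ : Set I)) := hAuniv.symm
          _ = μ (((f ⁻¹' B) ×ˢ (univ : Set I)) ∩ {p : I × I | f p.1 = g p.2}) :=
              (measure_inter_conull hEc).symm
          _ ≤ μ ((f ⁻¹' B) ×ˢ (g ⁻¹' B)) := by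
              apply measure_mono
              rintro ⟨x, y⟩ ⟨⟨hx, -⟩, heq⟩
              have heq' : f x = g y := heq
              exact ⟨hx, by simpa [Set.mem_preimage, ← heq'] using hx⟩
    exact markov_eq_ind hT μ hassoc hA hC hvol hAC
  · intro h
    -- each "off-diagonal rectangle" is null
    have null : ∀ B : Set I, MeasurableSet B →
        μ (((f ⁻¹' B) ×ˢ (g ⁻¹' B)ᶜ) ∪ ((f ⁻¹' B)ᶜ ×ˢ (g ⁻¹' B))) = 0 := by
      intro B hB
      have hA : MeasurableSet (f ⁻¹' B) := hf.measurable hB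
      have hC : MeasurableSet (g ⁻¹' B) := hg.measurable hB
      apply measure_union_null
      · have : (g ⁻¹' B)ᶜ = g ⁻¹' Bᶜ := rfl
        rw [this, hassoc _ _ hA (hg.measurable hB.compl), h Bᶜ hB.compl]
        have : ∫ x in f ⁻¹' B, (ind (f ⁻¹' Bᶜ)) x
            = ∫ x in f ⁻¹' B, (f ⁻¹' Bᶜ).indicator (fun _ => (1:ℝ)) x :=
          integral_congr_ae (ae_restrict_of_ae (ind_coe (hf.measurable hB.compl)))
        rw [this, setIntegral_indicator (hf.measurable hB.compl)]
        have : f ⁻¹' B ∩ f ⁻¹' Bᶜ = ∅ := by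
          ext x; simp [Set.mem_preimage]
        rw [this]
        simp
      · have : (f ⁻¹' B)ᶜ = f ⁻¹' Bᶜ := rfl
        rw [this, hassoc _ _ (hf.measurable hB.compl) hC, h B hB]
        have : ∫ x in f ⁻¹' Bᶜ, (ind (f ⁻¹' B)) x
            = ∫ x in f ⁻¹' Bᶜ, (f ⁻¹' B).indicator (fun _ => (1:ℝ)) x :=
          integral_congr_ae (ae_restrict_of_ae (ind_coe hA))
        rw [this, setIntegral_indicator hA]
        have : f ⁻¹' Bᶜ ∩ f ⁻¹' B = ∅ := by
          ext x; simp [Set.mem_preimage]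
        rw [this]
        simp
    -- countable cover of the complement
    set Bq : ℚ → Set I := fun q => {t : I | (t : ℝ) ≤ (q : ℝ)} with hBq
    have hBqm : ∀ q : ℚ, MeasurableSet (Bq q) := fun q =>
      measurableSet_le measurable_subtype_coe measurable_const
    have hcover : {p : I × I | f p.1 = g p.2}ᶜ ⊆
        ⋃ q : ℚ, (((f ⁻¹' Bq q) ×ˢ (g ⁻¹' Bq q)ᶜ) ∪ ((f ⁻¹' Bq q)ᶜ ×ˢ (g ⁻¹' Bq q))) := by
      rintro ⟨x, y⟩ hp
      have hne : f x ≠ g y := hp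
      rcases lt_or_gt_of_ne hne with hlt | hgt
      · have hlt' : ((f x : ℝ)) < ((g y : ℝ)) := hlt
        obtain ⟨q, hq1, hq2⟩ := exists_rat_btwn hlt'
        refine Set.mem_iUnion.mpr ⟨q, Or.inl ⟨?_, ?_⟩⟩
        · exact hq1.le
        · exact fun hc => absurd hq2 (not_lt.mpr hc)
      · have hgt' : ((g y : ℝ)) < ((f x : ℝ)) := hgt
        obtain ⟨q, hq1, hq2⟩ := exists_rat_btwn hgt'
        refine Set.mem_iUnion.mpr ⟨q, Or.inr ⟨?_, ?_⟩⟩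
        · exact fun hc => absurd hq2 (not_lt.mpr hc)
        · exact hq1.le
    have hEc : μ {p : I × I | f p.1 = g p.2}ᶜ = 0 := by
      refine le_antisymm ?_ zero_le
      calc μ {p : I × I | f p.1 = g p.2}ᶜ
          ≤ μ (⋃ q : ℚ, (((f ⁻¹' Bq q) ×ˢ (g ⁻¹' Bq q)ᶜ) ∪ ((f ⁻¹' Bq q)ᶜ ×ˢ (g ⁻¹' Bq q)))) :=
            measure_mono hcover
        _ = 0 := measure_iUnion_null fun q => null (Bq q) (hBqm q)
    exact (prob_compl_eq_zero_iff hE).mp hEc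
end
end
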